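/- Let T be a valid cut of S, let N be a tight mincut for T, and let F be a loose mincut for T. Let x and y be two distinct vertices in F \ N, and suppose some S-mincut A' contains exactly one of x and y. Then there exists an S-mincut C with C ∩ S = T (equivalently, with N ⊆ C ⊆ F) that contains exactly one of x and y. -/
import Mathlib


open Finset

/-- Capacity of the cut defined by `A`: number of edges with one endpoint in `A`
and the other outside `A`. -/
def cap {V : Type*} [Fintype V] [DecidableEq V] (w : V → V → ℕ) (A : Finset V) : ℕ :=
  ∑ a ∈ A, ∑ b ∈ Aᶜ, w a b

/-- A cut of `V` is a subset `A` with `∅ ≠ A ≠ V`. -/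
def IsCut {V : Type*} [Fintype V] (A : Finset V) : Prop :=
  A ≠ ∅ ∧ A ≠ Finset.univ

/-- An `S`-cut is a cut that divides `S`. -/
def IsSCut {V : Type*} [Fintype V] [DecidableEq V] (S A : Finset V) : Prop :=
  IsCut A ∧ (A ∩ S).Nonempty ∧ (S \ A).Nonempty

/-- An `S`-mincut is an `S`-cut of minimum capacity among all `S`-cuts. -/
def IsSMincut {V : Type*} [Fintype V] [DecidableEq V] (w : V → V → ℕ) (S A : Finset V) : Prop :=
  IsSCut S A ∧ ∀ B : Finset V, IsSCut S B → cap w A ≤ cap w B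

/-- `T ⊆ S` is a valid cut of `S` if some `S`-mincut `A` satisfies `A ∩ S = T`. -/
def IsValidCut {V : Type*} [Fintype V] [DecidableEq V] (w : V → V → ℕ) (S T : Finset V) : Prop :=
  ∃ A : Finset V, IsSMincut w S A ∧ A ∩ S = T

/-- A tight mincut for a valid cut `T` of `S`. -/
def IsTightMincut {V : Type*} [Fintype V] [DecidableEq V] (w : V → V → ℕ)
    (S T N : Finset V) : Prop :=
  IsSMincut w S N ∧ N ∩ S = T ∧ ∀ A : Finset V, IsSMincut w S A → A ∩ S = T → N ⊆ A

/-- A loose mincut for a valid cut `T` of `S`. -/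
def IsLooseMincut {V : Type*} [Fintype V] [DecidableEq V] (w : V → V → ℕ)
    (S T F : Finset V) : Prop :=
  IsSMincut w S F ∧ F ∩ S = T ∧ ∀ A : Finset V, IsSMincut w S A → A ∩ S = T → A ⊆ F

lemma cap_eq {V : Type*} [Fintype V] [DecidableEq V] (w : V → V → ℕ) (A : Finset V) :
    cap w A = ∑ a : V, ∑ b : V, if a ∈ A ∧ b ∉ A then w a b else 0 := by
  have h1 : ∀ a : V, ∑ b ∈ Aᶜ, w a b = ∑ b : V, if b ∉ A then w a b else 0 := fun a => by
    simp_rw [← Finset.mem_compl, Finset.sum_ite_mem, Finset.univ_inter]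
  calc cap w A = ∑ a ∈ A, ∑ b : V, if b ∉ A then w a b else 0 :=
        Finset.sum_congr rfl fun a _ => h1 a
    _ = ∑ a : V, if a ∈ A then (∑ b : V, if b ∉ A then w a b else 0) else 0 := by
        rw [Finset.sum_ite_mem, Finset.univ_inter]
    _ = ∑ a : V, ∑ b : V, if a ∈ A ∧ b ∉ A then w a b else 0 := by
        refine Finset.sum_congr rfl fun a _ => ?_
        by_cases h : a ∈ A <;> simp [h]

lemma cap_compl {V : Type*} [Fintype V] [DecidableEq V] (w : V → V → ℕ)
    (hsymm : ∀ u v : V, w u v = w v u) (A : Finset V) : cap w Aᶜ = cap w A := by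
  unfold cap
  rw [compl_compl, Finset.sum_comm]
  exact Finset.sum_congr rfl fun a _ => Finset.sum_congr rfl fun b _ => hsymm b a

lemma cap_submod {V : Type*} [Fintype V] [DecidableEq V] (w : V → V → ℕ) (A B : Finset V) :
    cap w (A ∪ B) + cap w (A ∩ B) ≤ cap w A + cap w B := by
  simp_rw [cap_eq, ← Finset.sum_add_distrib]
  refine Finset.sum_le_sum fun a _ => Finset.sum_le_sum fun b _ => ?_
  by_cases haA : a ∈ A <;> by_cases haB : a ∈ B <;> by_cases hbA : b ∈ A <;>
    by_cases hbB : b ∈ B <;>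
    simp [Finset.mem_union, Finset.mem_inter, haA, haB, hbA, hbB]

lemma cap_posimod {V : Type*} [Fintype V] [DecidableEq V] (w : V → V → ℕ)
    (hsymm : ∀ u v : V, w u v = w v u) (A B : Finset V) :
    cap w (A \ B) + cap w (B \ A) ≤ cap w A + cap w B := by
  have h := cap_submod w A Bᶜ
  rw [cap_compl w hsymm B] at h
  have h1 : A \ B = A ∩ Bᶜ := by ext v; simp
  have h2 : B \ A = (A ∪ Bᶜ)ᶜ := by ext v; simp [and_comm]
  rw [h1, h2, cap_compl w hsymm]
  omega

lemma isSCut_ne_univ {V : Type*} [Fintype V] [DecidableEq V] {S A : Finset V}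
    (h : (S \ A).Nonempty) : A ≠ Finset.univ := by
  obtain ⟨s, hs⟩ := h
  simp only [mem_sdiff] at hs
  intro hA
  exact hs.2 (hA ▸ mem_univ s)

lemma isSCut_of {V : Type*} [Fintype V] [DecidableEq V] {S A : Finset V}
    (h1 : (A ∩ S).Nonempty) (h2 : (S \ A).Nonempty) : IsSCut S A := by
  refine ⟨⟨?_, isSCut_ne_univ h2⟩, h1, h2⟩
  obtain ⟨a, ha⟩ := h1
  intro hA
  simp [hA] at ha

lemma isSMincut_compl {V : Type*} [Fintype V] [DecidableEq V] {w : V → V → ℕ}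
    (hsymm : ∀ u v : V, w u v = w v u) {S A : Finset V} (hA : IsSMincut w S A) :
    IsSMincut w S Aᶜ := by
  obtain ⟨⟨_, ⟨a, ha⟩, ⟨s, hs⟩⟩, hmin⟩ := hA
  simp only [mem_inter, mem_sdiff] at ha hs
  refine ⟨isSCut_of ⟨s, ?_⟩ ⟨a, ?_⟩, fun B hB => ?_⟩
  · simp [hs.1, hs.2]
  · simp [ha.1, ha.2]
  · rw [cap_compl w hsymm]; exact hmin B hB

lemma caseA {V : Type*} [Fintype V] [DecidableEq V] {w : V → V → ℕ} {S T F A : Finset V}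
    (hF : IsSMincut w S F) (hFS : F ∩ S = T)
    (hA : IsSMincut w S A) (hTA : T ⊆ A) :
    IsSMincut w S (A ∩ F) ∧ (A ∩ F) ∩ S = T := by
  have hTne : T.Nonempty := hFS ▸ hF.1.2.1
  obtain ⟨t, ht⟩ := hTne
  have htFS : t ∈ F ∩ S := by rw [hFS]; exact ht
  rw [mem_inter] at htFS
  have hIS : (A ∩ F) ∩ S = T := by
    ext v
    simp only [mem_inter]
    constructor
    · rintro ⟨⟨hvA, hvF⟩, hvS⟩
      rw [← hFS]; exact mem_inter.mpr ⟨hvF, hvS⟩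
    · intro hvT
      have hvFS : v ∈ F ∩ S := by rw [hFS]; exact hvT
      rw [mem_inter] at hvFS
      exact ⟨⟨hTA hvT, hvFS.1⟩, hvFS.2⟩
  -- A ∩ F is an S-cut
  have hcut1 : IsSCut S (A ∩ F) := by
    refine isSCut_of ⟨t, ?_⟩ ?_
    · rw [hIS]; exact ht
    · obtain ⟨s, hs⟩ := hF.1.2.2
      rw [mem_sdiff] at hs
      exact ⟨s, mem_sdiff.mpr ⟨hs.1, fun h => hs.2 (mem_inter.mp h).2⟩⟩
  -- A ∪ F is an S-cut
  have hcut2 : IsSCut S (A ∪ F) := by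
    refine isSCut_of ⟨t, mem_inter.mpr ⟨mem_union_left _ (hTA ht), htFS.2⟩⟩ ?_
    obtain ⟨s, hs⟩ := hA.1.2.2
    rw [mem_sdiff] at hs
    refine ⟨s, mem_sdiff.mpr ⟨hs.1, fun h => ?_⟩⟩
    rcases mem_union.mp h with h' | h'
    · exact hs.2 h'
    · exact hs.2 (hTA (by rw [← hFS]; exact mem_inter.mpr ⟨h', hs.1⟩))
  have hsub := cap_submod w A F
  have h1 := hA.2 _ hcut2
  have h2 := hA.2 F hF.1
  have h3 := hF.2 A hA.1
  have hle : cap w (A ∩ F) ≤ cap w F := by omega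
  exact ⟨⟨hcut1, fun B hB => hle.trans (hF.2 B hB)⟩, hIS⟩

lemma caseB {V : Type*} [Fintype V] [DecidableEq V] {w : V → V → ℕ} {S T N A : Finset V}
    (hN : IsSMincut w S N) (hNS : N ∩ S = T)
    (hA : IsSMincut w S A) (hAS : A ∩ S ⊆ T) :
    IsSMincut w S (N ∪ A) ∧ (N ∪ A) ∩ S = T := by
  have hIS : (N ∪ A) ∩ S = T := by
    rw [union_inter_distrib_right, hNS]
    exact union_eq_left.mpr hAS
  obtain ⟨a, ha⟩ := hA.1.2.1
  rw [mem_inter] at ha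
  have haT : a ∈ T := hAS (mem_inter.mpr ⟨ha.1, ha.2⟩)
  have haN : a ∈ N := by have : a ∈ N ∩ S := by rw [hNS]; exact haT
                         exact (mem_inter.mp this).1
  have hcut1 : IsSCut S (N ∩ A) := by
    refine isSCut_of ⟨a, by simp [haN, ha.1, ha.2]⟩ ?_
    obtain ⟨s, hs⟩ := hN.1.2.2
    rw [mem_sdiff] at hs
    exact ⟨s, mem_sdiff.mpr ⟨hs.1, fun h => hs.2 (mem_inter.mp h).1⟩⟩
  have hcut2 : IsSCut S (N ∪ A) := by
    refine isSCut_of ⟨a, by simp [ha.2, mem_union_right _ ha.1]⟩ ?_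
    obtain ⟨s, hs⟩ := hN.1.2.2
    rw [mem_sdiff] at hs
    refine ⟨s, mem_sdiff.mpr ⟨hs.1, fun h => ?_⟩⟩
    rcases mem_union.mp h with h' | h'
    · exact hs.2 h'
    · have : s ∈ T := hAS (mem_inter.mpr ⟨h', hs.1⟩)
      exact hs.2 (by have : s ∈ N ∩ S := by rw [hNS]; exact this
                     exact (mem_inter.mp this).1)
  have hsub := cap_submod w N A
  have h1 := hN.2 _ hcut1
  have h2 := hN.2 A hA.1
  have h3 := hA.2 N hN.1
  have hle : cap w (N ∪ A) ≤ cap w N := by omega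
  exact ⟨⟨hcut2, fun B hB => hle.trans (hN.2 B hB)⟩, hIS⟩

/-- If `A` properly crosses `T` (both sides of `T` met, and `A∩S` leaves `T`), then
`A \ N` is an `S`-mincut. -/
lemma caseD {V : Type*} [Fintype V] [DecidableEq V] {w : V → V → ℕ} {S T N A : Finset V}
    (hsymm : ∀ u v : V, w u v = w v u)
    (hN : IsSMincut w S N) (hNS : N ∩ S = T)
    (hA : IsSMincut w S A)
    (h0 : (T \ A).Nonempty) (h1 : (T ∩ A).Nonempty) (h2 : ((A ∩ S) \ T).Nonempty) :
    IsSMincut w S (A \ N) := by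
  have hTsubS : T ⊆ S := hNS ▸ inter_subset_right
  have hTsubN : T ⊆ N := hNS ▸ inter_subset_left
  obtain ⟨t0, ht0⟩ := h0; rw [mem_sdiff] at ht0
  obtain ⟨t1, ht1⟩ := h1; rw [mem_inter] at ht1
  obtain ⟨s2, hs2⟩ := h2; rw [mem_sdiff, mem_inter] at hs2
  have hs2N : s2 ∉ N := fun h => hs2.2 (by rw [← hNS]; exact mem_inter.mpr ⟨h, hs2.1.2⟩)
  have hcut1 : IsSCut S (A \ N) := by
    refine isSCut_of ⟨s2, by simp [hs2.1.1, hs2.1.2, hs2N]⟩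
      ⟨t1, by simp [hTsubS ht1.1, hTsubN ht1.1, ht1.2]⟩
  have hcut2 : IsSCut S (N \ A) := by
    refine isSCut_of ⟨t0, by simp [hTsubS ht0.1, hTsubN ht0.1, ht0.2]⟩
      ⟨t1, by simp [hTsubS ht1.1, ht1.2]⟩
  have hsub := cap_posimod w hsymm N A
  have hh1 := hN.2 _ hcut2
  have h2 := hN.2 A hA.1
  have h3 := hA.2 N hN.1
  have hle : cap w (A \ N) ≤ cap w A := by omega
  exact ⟨hcut1, fun B hB => hle.trans (hA.2 B hB)⟩

lemma key_sep {V : Type*} [Fintype V] [DecidableEq V]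
    (w : V → V → ℕ) (hsymm : ∀ u v : V, w u v = w v u)
    (S T : Finset V)
    (N F : Finset V) (hN : IsTightMincut w S T N) (hF : IsLooseMincut w S T F)
    (x y : V) (hx : x ∈ F \ N) (hy : y ∈ F \ N)
    (A' : Finset V) (hA' : IsSMincut w S A')
    (hxA : x ∈ A') (hyA : y ∉ A') :
    ∃ C : Finset V, IsSMincut w S C ∧ C ∩ S = T ∧
      ((x ∈ C ∧ y ∉ C) ∨ (y ∈ C ∧ x ∉ C)) := by
  rw [mem_sdiff] at hx hy
  by_cases hTA : T ⊆ A'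
  · obtain ⟨hmc, hcs⟩ := caseA hF.1 hF.2.1 hA' hTA
    exact ⟨A' ∩ F, hmc, hcs, Or.inl ⟨mem_inter.mpr ⟨hxA, hx.1⟩,
      fun h => hyA (mem_inter.mp h).1⟩⟩
  · by_cases hTA2 : T ∩ A' = ∅
    · have hA'c := isSMincut_compl hsymm hA'
      have hTc : T ⊆ A'ᶜ := fun t ht => mem_compl.mpr fun h =>
        (Finset.notMem_empty t) (hTA2 ▸ mem_inter.mpr ⟨ht, h⟩)
      obtain ⟨hmc, hcs⟩ := caseA hF.1 hF.2.1 hA'c hTc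
      exact ⟨A'ᶜ ∩ F, hmc, hcs, Or.inr ⟨mem_inter.mpr ⟨mem_compl.mpr hyA, hy.1⟩,
        fun h => (mem_compl.mp (mem_inter.mp h).1) hxA⟩⟩
    · have hTi : (T ∩ A').Nonempty := nonempty_iff_ne_empty.mpr hTA2
      have hTd : (T \ A').Nonempty := by
        obtain ⟨t, ht, hta⟩ := not_subset.mp hTA
        exact ⟨t, mem_sdiff.mpr ⟨ht, hta⟩⟩
      by_cases hsub : A' ∩ S ⊆ T
      · obtain ⟨hmc, hcs⟩ := caseB hN.1 hN.2.1 hA' hsub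
        refine ⟨N ∪ A', hmc, hcs, Or.inl ⟨mem_union_right _ hxA, fun h => ?_⟩⟩
        rcases mem_union.mp h with h' | h'
        · exact hy.2 h'
        · exact hyA h'
      · have h2 : ((A' ∩ S) \ T).Nonempty := by
          obtain ⟨s, hs1, hs2⟩ := not_subset.mp hsub
          exact ⟨s, mem_sdiff.mpr ⟨hs1, hs2⟩⟩
        have hA'' := caseD hsymm hN.1 hN.2.1 hA' hTd hTi h2
        have hA''c := isSMincut_compl hsymm hA''
        have hTsubN : T ⊆ N := hN.2.1 ▸ inter_subset_left
        have hTc : T ⊆ (A' \ N)ᶜ := fun t ht => mem_compl.mpr fun h =>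
          (mem_sdiff.mp h).2 (hTsubN ht)
        obtain ⟨hmc, hcs⟩ := caseA hF.1 hF.2.1 hA''c hTc
        refine ⟨(A' \ N)ᶜ ∩ F, hmc, hcs, Or.inr ⟨?_, ?_⟩⟩
        · exact mem_inter.mpr ⟨mem_compl.mpr fun h => hyA (mem_sdiff.mp h).1, hy.1⟩
        · intro h
          exact (mem_compl.mp (mem_inter.mp h).1) (mem_sdiff.mpr ⟨hxA, hx.2⟩)

/-- Distinctness: let `T` be a valid cut of `S` with tight mincut `N` and loose mincut `F`.
If `x ≠ y` lie in `F \ N` and some `S`-mincut separates `x` from `y`, then some `S`-mincut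
from the bunch of `T` (i.e. one whose Steiner side is `T`) separates `x` from `y`. -/
theorem distinctness_of_stretched_units {V : Type*} [Fintype V] [DecidableEq V]
    (w : V → V → ℕ) (hsymm : ∀ u v : V, w u v = w v u) (hloop : ∀ v : V, w v v = 0)
    (S : Finset V) (hS : 2 ≤ S.card)
    (T : Finset V) (hT : IsValidCut w S T)
    (N F : Finset V) (hN : IsTightMincut w S T N) (hF : IsLooseMincut w S T F)
    (x y : V) (hxy : x ≠ y) (hx : x ∈ F \ N) (hy : y ∈ F \ N)
    (A' : Finset V) (hA' : IsSMincut w S A')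
    (hsep : (x ∈ A' ∧ y ∉ A') ∨ (y ∈ A' ∧ x ∉ A')) :
    ∃ C : Finset V, IsSMincut w S C ∧ C ∩ S = T ∧
      ((x ∈ C ∧ y ∉ C) ∨ (y ∈ C ∧ x ∉ C)) := by
  rcases hsep with ⟨h1, h2⟩ | ⟨h1, h2⟩
  · exact key_sep w hsymm S T N F hN hF x y hx hy A' hA' h1 h2
  · obtain ⟨C, hC1, hC2, hC3⟩ := key_sep w hsymm S T N F hN hF y x hy hx A' hA' h1 h2
    exact ⟨C, hC1, hC2, hC3.symm⟩
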